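/- arXiv:1712.06403 — 2 statements merged into one kernel-verified Lean document; each statement's English description precedes it below -/
import Mathlib

section
/- Let m ≥ 4 be an even integer and let n be an even integer with n ≥ 2m. Then f_m(n) ≤ 2·f_m(n/2) + 2·f_{m−1}(n/2) + 2·f_{m−2}(n/2)·f_2(n/2) + 2·f_{m−3}(n/2)·f_3(n/2) + ⋯ + 2·f_{m/2+1}(n/2)·f_{m/2−1}(n/2) + [f_{m/2}(n/2)]², i.e., f_m(n) ≤ 2·∑_{i=0}^{m/2−1} f_i(n/2)·f_{m−i}(n/2) + [f_{m/2}(n/2)]², where by convention f_0(n/2) = f_1(n/2) = 1. -/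
/-- A complete `r`-partite `r`-graph (a "block") on a finite vertex set `V ⊆ ℕ`:
it is determined by `r` pairwise disjoint nonempty subsets of `V`. -/
structure Block (V : Finset ℕ) (r : ℕ) where
  parts : Fin r → Finset ℕ
  nonempty : ∀ i, (parts i).Nonempty
  subset : ∀ i, parts i ⊆ V
  disj : ∀ i j, i ≠ j → Disjoint (parts i) (parts j)

/-- The edge set of a block: all sets contained in the union of the parts
meeting each part in exactly one vertex. -/
def Block.edges {V : Finset ℕ} {r : ℕ} (B : Block V r) : Set (Finset ℕ) :=
  {X | (∀ i, (X ∩ B.parts i).card = 1) ∧ ∀ x ∈ X, ∃ i, x ∈ B.parts i}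

/-- `ExactCover V r k F` : there are `k` complete `r`-partite `r`-graphs on `V`
whose edge sets are pairwise disjoint and whose union is the family `F`. -/
def ExactCover (V : Finset ℕ) (r k : ℕ) (F : Set (Finset ℕ)) : Prop :=
  ∃ B : Fin k → Block V r,
    (∀ i j, i ≠ j → Disjoint (B i).edges (B j).edges) ∧
    (⋃ i, (B i).edges) = F

/-- `f r n` : the minimum number of complete `r`-partite `r`-graphs needed to
partition the edge set of the complete `r`-uniform hypergraph on `[n]`. -/
noncomputable def f (r n : ℕ) : ℕ :=
  sInf {k | ExactCover (Finset.range n) r k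
    {X | X ⊆ Finset.range n ∧ X.card = r}}

/-!
Split `range (q + q)` into `A = range q` and its translate `A' = A + q`. An `m`-set `X` has type
`(i, j)` with `i + j = m` when `#(X ∩ A) = i` and `#(X ∩ A') = j`. Given partitions of the
`i`-subsets of `A` into `f i q` blocks and of the `j`-subsets of `A'` into `f j q` blocks,
concatenating the parts of one block of each gives `f i q * f j q` blocks partitioning the
`m`-sets of type `(i, j)`. Hence `f m (q + q) ≤ ∑_{i + j = m} f i q * f j q`, and for `m = c + c`
the terms `(i, j)` and `(j, i)` coincide, leaving twice the sum over `i < c` plus `(f c q)^2`.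
-/

open Finset

namespace Block

variable {V : Finset ℕ} {r : ℕ}

lemma mem_edges_iff (B : Block V r) (X : Finset ℕ) :
    X ∈ B.edges ↔ (∀ i, #(X ∩ B.parts i) = 1) ∧ ∀ x ∈ X, ∃ i, x ∈ B.parts i := Iff.rfl

def ofEmbedding (x : Fin r ↪ ℕ) (hx : ∀ i, x i ∈ V) : Block V r where
  parts i := {x i}
  nonempty _ := singleton_nonempty _
  subset i := singleton_subset_iff.mpr (hx i)
  disj _ _ hij := disjoint_singleton.mpr (x.injective.ne hij)

lemma edges_ofEmbedding (x : Fin r ↪ ℕ) (hx : ∀ i, x i ∈ V) :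
    (ofEmbedding x hx).edges = {univ.map x} := by
  have card_eq_one_iff (Y : Finset ℕ) (a : ℕ) : #(Y ∩ {a}) = 1 ↔ a ∈ Y := by
    by_cases h : a ∈ Y <;> simp [h]
  ext Y
  simp only [mem_edges_iff, ofEmbedding, card_eq_one_iff, mem_singleton, Set.mem_singleton_iff]
  constructor
  · rintro ⟨hsup, hsub⟩
    ext y
    simp only [mem_map, mem_univ, true_and]
    exact ⟨fun hy => (hsub y hy).imp fun _ => Eq.symm, by rintro ⟨i, rfl⟩; exact hsup i⟩
  · rintro rfl
    simp [eq_comm]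

def map (e : ℕ ↪ ℕ) (B : Block V r) : Block (V.map e) r where
  parts i := (B.parts i).map e
  nonempty i := (B.nonempty i).map
  subset i := map_subset_map.mpr (B.subset i)
  disj i j hij := (disjoint_map e).mpr (B.disj i j hij)

lemma edges_map (e : ℕ ↪ ℕ) (B : Block V r) : (B.map e).edges = Finset.map e '' B.edges := by
  classical
  have map_mem_iff (Y : Finset ℕ) : Y.map e ∈ (B.map e).edges ↔ Y ∈ B.edges := by
    simp only [mem_edges_iff, Block.map, ← map_inter, card_map, forall_mem_map, mem_map']
  ext X
  refine ⟨fun hX => ?_, by rintro ⟨Y, hY, rfl⟩; exact (map_mem_iff Y).mpr hY⟩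
  obtain ⟨Y, -, rfl⟩ : ∃ Y ⊆ V, X = Y.map e := subset_map_iff.mp fun x hx =>
    have ⟨i, hi⟩ := hX.2 x hx
    (B.map e).subset i hi
  exact ⟨Y, (map_mem_iff Y).mp hX, rfl⟩

def append {A A' : Finset ℕ} (hA : Disjoint A A') {r' : ℕ} (B : Block A r) (B' : Block A' r') :
    Block (A ∪ A') (r + r') where
  parts := Fin.append B.parts B'.parts
  nonempty := (Fin.forall_fin_add _).mpr ⟨by simpa using B.nonempty, by simpa using B'.nonempty⟩
  subset := (Fin.forall_fin_add _).mpr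
    ⟨fun i => by simpa using (B.subset i).trans subset_union_left,
     fun i => by simpa using (B'.subset i).trans subset_union_right⟩
  disj i j hij := by
    cases i using Fin.addCases <;> cases j using Fin.addCases <;>
      simp only [Fin.append_left, Fin.append_right]
    · exact B.disj _ _ fun h => hij (congrArg _ h)
    · exact hA.mono (B.subset _) (B'.subset _)
    · exact hA.symm.mono (B'.subset _) (B.subset _)
    · exact B'.disj _ _ fun h => hij (congrArg _ h)

lemma edges_append {A A' : Finset ℕ} (hA : Disjoint A A') {r' : ℕ} (B : Block A r)
    (B' : Block A' r') :
    (B.append hA B').edges = {X | X ∩ A ∈ B.edges ∧ X ∩ A' ∈ B'.edges ∧ X ⊆ A ∪ A'} := by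
  ext X
  have inter_left (i) : X ∩ A ∩ B.parts i = X ∩ B.parts i := by
    rw [inter_assoc, inter_eq_right.mpr (B.subset i)]
  have inter_right (i) : X ∩ A' ∩ B'.parts i = X ∩ B'.parts i := by
    rw [inter_assoc, inter_eq_right.mpr (B'.subset i)]
  have mem_parts (x) : (∃ i, x ∈ Fin.append B.parts B'.parts i) ↔
      (∃ i, x ∈ B.parts i) ∨ ∃ i, x ∈ B'.parts i := by
    simpa only [not_forall, not_and_or, not_not, Fin.append_left, Fin.append_right] using
      not_congr (Fin.forall_fin_add fun i => x ∉ Fin.append B.parts B'.parts i)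
  have mem_left (x) : (∃ i, x ∈ B.parts i) → x ∈ A := fun ⟨i, hi⟩ => B.subset i hi
  have mem_right (x) : (∃ i, x ∈ B'.parts i) → x ∈ A' := fun ⟨i, hi⟩ => B'.subset i hi
  simp only [mem_edges_iff, append, Fin.forall_fin_add, Fin.append_left, Fin.append_right,
    Set.mem_ofPred_eq, inter_left, inter_right, mem_inter, mem_parts, subset_iff, mem_union]
  constructor
  · rintro ⟨⟨h, h'⟩, hX⟩
    refine ⟨⟨h, fun x ⟨hx, hxA⟩ => (hX x hx).resolve_right fun hx' => ?_⟩,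
      ⟨h', fun x ⟨hx, hxA'⟩ => (hX x hx).resolve_left fun hx' => ?_⟩,
      fun x hx => (hX x hx).imp (mem_left x) (mem_right x)⟩
    · exact disjoint_left.mp hA hxA (mem_right x hx')
    · exact disjoint_left.mp hA (mem_left x hx') hxA'
  · rintro ⟨⟨h, hX⟩, ⟨h', hX'⟩, hsub⟩
    exact ⟨⟨h, h'⟩, fun x hx => (hsub hx).imp (fun hxA => hX x ⟨hx, hxA⟩)
      (fun hxA' => hX' x ⟨hx, hxA'⟩)⟩

end Block

namespace ExactCover

variable {V : Finset ℕ} {r k : ℕ} {F : Set (Finset ℕ)}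

lemma of_fintype {ι : Type*} [Fintype ι] (B : ι → Block V r)
    (hdisj : Pairwise fun i j => Disjoint (B i).edges (B j).edges) (hcover : ⋃ i, (B i).edges = F) :
    ExactCover V r (Fintype.card ι) F := by
  let e := (Fintype.equivFin ι).symm
  refine ⟨B ∘ e, fun i j hij => hdisj (e.injective.ne hij), ?_⟩
  rw [← hcover]
  exact e.surjective.iUnion_comp fun i => (B i).edges

lemma map (e : ℕ ↪ ℕ) (h : ExactCover V r k F) :
    ExactCover (V.map e) r k (Finset.map e '' F) := by
  obtain ⟨B, hdisj, hcover⟩ := h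
  refine ⟨fun i => (B i).map e, fun i j hij => ?_, ?_⟩
  · simpa only [Block.edges_map, Set.disjoint_image_iff (map_injective e)] using hdisj i j hij
  · simp only [Block.edges_map, ← Set.image_iUnion, hcover]

lemma append {A A' : Finset ℕ} (hA : Disjoint A A') {r' k' : ℕ} {F' : Set (Finset ℕ)}
    (h : ExactCover A r k F) (h' : ExactCover A' r' k' F') :
    ExactCover (A ∪ A') (r + r') (k * k') {X | X ∩ A ∈ F ∧ X ∩ A' ∈ F' ∧ X ⊆ A ∪ A'} := by
  obtain ⟨B, hdisj, rfl⟩ := h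
  obtain ⟨B', hdisj', rfl⟩ := h'
  have card : Fintype.card (Fin k × Fin k') = k * k' := by simp
  rw [← card]
  refine of_fintype (fun p => (B p.1).append hA (B' p.2)) ?_ ?_
  · rintro ⟨i, i'⟩ ⟨j, j'⟩ hij
    simp only [Block.edges_append, Set.disjoint_left]
    rintro X ⟨hi, hi', -⟩ ⟨hj, hj', -⟩
    by_cases h : i = j
    · exact Set.disjoint_left.mp (hdisj' i' j' fun h' => hij (by rw [h, h'])) hi' hj'
    · exact Set.disjoint_left.mp (hdisj i j h) hi hj
  · ext X
    simp [Block.edges_append]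

lemma iUnion {ι : Type*} [Fintype ι] {k : ι → ℕ} {F : ι → Set (Finset ℕ)}
    (hF : Pairwise fun i j => Disjoint (F i) (F j)) (h : ∀ i, ExactCover V r (k i) (F i)) :
    ExactCover V r (∑ i, k i) (⋃ i, F i) := by
  choose B hdisj hcover using h
  have card : Fintype.card (Σ i, Fin (k i)) = ∑ i, k i := by simp
  rw [← card]
  refine of_fintype (fun p => B p.1 p.2) ?_ ?_
  · rintro ⟨i, a⟩ ⟨j, b⟩ hab
    dsimp only
    by_cases h : i = j
    · subst h
      exact hdisj i a b fun h => hab (by rw [h])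
    · have hFij : Disjoint (F i) (F j) := hF h
      rw [← hcover i, ← hcover j] at hFij
      exact hFij.mono (Set.subset_iUnion (fun c => (B i c).edges) a)
        (Set.subset_iUnion (fun c => (B j c).edges) b)
  · rw [Set.iUnion_sigma]
    simp only [hcover]

end ExactCover

lemma image_map_setOf_subset_card (e : ℕ ↪ ℕ) (V : Finset ℕ) (r : ℕ) :
    Finset.map e '' {Y | Y ⊆ V ∧ #Y = r} = {X | X ⊆ V.map e ∧ #X = r} := by
  ext X
  constructor
  · rintro ⟨Y, ⟨hY, rfl⟩, rfl⟩
    exact ⟨map_subset_map.mpr hY, card_map e⟩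
  · rintro ⟨hX, rfl⟩
    obtain ⟨Y, hY, rfl⟩ := subset_map_iff.mp hX
    exact ⟨Y, ⟨hY, (card_map e).symm⟩, rfl⟩

lemma setOf_subset_union_card_eq {A A' : Finset ℕ} (hA : Disjoint A A') (m : ℕ) :
    {X | X ⊆ A ∪ A' ∧ #X = m} =
      ⋃ p : antidiagonal m, {X | #(X ∩ A) = p.1.1 ∧ #(X ∩ A') = p.1.2 ∧ X ⊆ A ∪ A'} := by
  have card_split {X : Finset ℕ} (hX : X ⊆ A ∪ A') : #(X ∩ A) + #(X ∩ A') = #X := by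
    rw [← card_union_of_disjoint (hA.mono inter_subset_right inter_subset_right),
      ← inter_union_distrib_left, inter_eq_left.mpr hX]
  ext X
  simp only [Set.mem_ofPred_eq, Set.mem_iUnion, Subtype.exists, HasAntidiagonal.mem_antidiagonal,
    Prod.exists, exists_prop]
  constructor
  · rintro ⟨hX, rfl⟩
    exact ⟨_, _, card_split hX, rfl, rfl, hX⟩
  · rintro ⟨i, j, rfl, rfl, rfl, hX⟩
    exact ⟨hX, (card_split hX).symm⟩

lemma pairwise_disjoint_setOf_card_inter (A A' : Finset ℕ) (m : ℕ) :
    Pairwise fun p q : antidiagonal m =>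
      Disjoint {X | #(X ∩ A) = p.1.1 ∧ #(X ∩ A') = p.1.2 ∧ X ⊆ A ∪ A'}
        {X | #(X ∩ A) = q.1.1 ∧ #(X ∩ A') = q.1.2 ∧ X ⊆ A ∪ A'} := by
  rintro p q hpq
  refine Set.disjoint_left.mpr fun X ⟨hp₁, hp₂, _⟩ ⟨hq₁, hq₂, _⟩ => hpq ?_
  exact Subtype.ext (Prod.ext (hp₁.symm.trans hq₁) (hp₂.symm.trans hq₂))

lemma ExactCover.subsets_union {A A' : Finset ℕ} (hA : Disjoint A A') (m : ℕ) {k k' : ℕ → ℕ}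
    (h : ∀ i, ExactCover A i (k i) {Y | Y ⊆ A ∧ #Y = i})
    (h' : ∀ j, ExactCover A' j (k' j) {Y | Y ⊆ A' ∧ #Y = j}) :
    ExactCover (A ∪ A') m (∑ p ∈ antidiagonal m, k p.1 * k' p.2) {X | X ⊆ A ∪ A' ∧ #X = m} := by
  have piece (p : antidiagonal m) : ExactCover (A ∪ A') m (k p.1.1 * k' p.1.2)
      {X | #(X ∩ A) = p.1.1 ∧ #(X ∩ A') = p.1.2 ∧ X ⊆ A ∪ A'} := by
    simpa only [HasAntidiagonal.mem_antidiagonal.mp p.2, Set.mem_ofPred_eq, inter_subset_right,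
      true_and] using (h p.1.1).append hA (h' p.1.2)
  rw [setOf_subset_union_card_eq hA, ← sum_coe_sort _ fun p : ℕ × ℕ => k p.1 * k' p.2]
  exact ExactCover.iUnion (pairwise_disjoint_setOf_card_inter A A' m) piece

lemma exists_exactCover_subsets (V : Finset ℕ) (r : ℕ) :
    ∃ k, ExactCover V r k {X | X ⊆ V ∧ #X = r} := by
  have hX (X : powersetCard r V) : X.1 ⊆ V ∧ #X.1 = r := mem_powersetCard.mp X.2
  let B (X : powersetCard r V) : Block V r :=
    Block.ofEmbedding (X.1.orderEmbOfFin (hX X).2).toEmbedding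
      fun i => (hX X).1 (X.1.orderEmbOfFin_mem (hX X).2 i)
  have edges_B (X : powersetCard r V) : (B X).edges = {X.1} := by
    simp [B, Block.edges_ofEmbedding]
  refine ⟨_, ExactCover.of_fintype B (fun X Y hXY => ?_) ?_⟩
  · simpa [edges_B] using Subtype.val_injective.ne hXY
  · ext X
    simp [edges_B]

lemma exactCover_f (r n : ℕ) :
    ExactCover (range n) r (f r n) {X | X ⊆ range n ∧ #X = r} :=
  Nat.sInf_mem (exists_exactCover_subsets _ r)

lemma f_le_of_exactCover {r n k : ℕ} (h : ExactCover (range n) r k {X | X ⊆ range n ∧ #X = r}) :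
    f r n ≤ k :=
  Nat.sInf_le h

theorem f_add_self_le (m q : ℕ) : f m (q + q) ≤ ∑ p ∈ antidiagonal m, f p.1 q * f p.2 q := by
  refine f_le_of_exactCover ?_
  rw [range_add]
  refine ExactCover.subsets_union (disjoint_range_addLeftEmbedding q _) m (k' := (f · q))
    (exactCover_f · q) fun j => ?_
  rw [← image_map_setOf_subset_card]
  exact (exactCover_f j q).map _

lemma sum_antidiagonal_add_self_mul {R : Type*} [CommSemiring R] (g : ℕ → R) (c : ℕ) :
    ∑ p ∈ antidiagonal (c + c), g p.1 * g p.2 =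
      2 * ∑ i ∈ range c, g i * g (c + c - i) + g c ^ 2 := by
  have upper_half : ∑ i ∈ range c, g (c + (i + 1)) * g (c + c - (c + (i + 1))) =
      ∑ i ∈ range c, g i * g (c + c - i) := by
    rw [← sum_range_reflect]
    refine sum_congr rfl fun i hi => ?_
    have := mem_range.mp hi
    rw [mul_comm]
    congr 2 <;> omega
  rw [Nat.sum_antidiagonal_eq_sum_range_succ (g · * g ·),
    show (c + c).succ = c + (c + 1) by omega, sum_range_add, sum_range_succ', upper_half]
  simp only [add_zero, Nat.add_sub_cancel_left, sq]
  ring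

theorem f_even_recurrence_general (m n : ℕ) (hme : Even m) (hne : Even n) :
    f m n ≤ 2 * (∑ i ∈ Finset.range (m / 2), f i (n / 2) * f (m - i) (n / 2))
      + (f (m / 2) (n / 2)) ^ 2 := by
  obtain ⟨c, rfl⟩ := hme
  obtain ⟨q, rfl⟩ := hne
  have hc : (c + c) / 2 = c := by omega
  have hq : (q + q) / 2 = q := by omega
  calc f (c + c) (q + q) ≤ ∑ p ∈ antidiagonal (c + c), f p.1 q * f p.2 q := f_add_self_le _ q
    _ = _ := by rw [hc, hq]; exact sum_antidiagonal_add_self_mul (f · q) c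

theorem f_even_recurrence (m n : ℕ) (hm : 4 ≤ m) (hme : Even m) (hne : Even n) (hn : 2 * m ≤ n) :
    f m n ≤ 2 * (∑ i ∈ Finset.range (m / 2), f i (n / 2) * f (m - i) (n / 2))
      + (f (m / 2) (n / 2)) ^ 2 :=
  f_even_recurrence_general m n hme hne
end

section
/- Let S and T be disjoint finite sets and let a and b be even nonnegative integers with a + 1 ≤ |S| and b + 1 ≤ |T|. Then the family ((S choose a) × (T choose b+1)) ∪ ((S choose a+1) × (T choose b)) can be exactly covered using at most C(|S|, a/2) · C(|T|, b/2) complete (a+b+1)-partite (a+b+1)-graphs on S ∪ T, where C(n, k) denotes the binomial coefficient. -/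
/-!
For `P ⊆ S` with `P = {p₁ < ⋯ < pₖ}` take the parts `{pᵢ}` and the gaps `S ∩ (pᵢ₋₁, pᵢ)`, do the
same for `Q ⊆ T`, and add one last part: the elements of `S` above `P` together with those of `T`
above `Q`. This is a block with `2|P| + 2|Q| + 1` parts (when all of them are nonempty). A set `A`
with at most one element above `pₖ` meets `{p₁}, gap₁, …, {pₖ}, gapₖ` once each iff
`p₁, …, pₖ` are exactly its elements of even rank. Hence a set `X` of the family is an edge of
exactly one block, namely that of `P` = the elements of even rank of `X ∩ S` and `Q` = those of
`X ∩ T`, and these satisfy `|P| = a/2`, `|Q| = b/2`.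
-/

open Finset

section Blocks

variable {V : Finset ℕ} {r : ℕ}

noncomputable def Block.ofFibers {κ : Type*} [DecidableEq κ] (g : ℕ → κ) (K : Finset κ)
    (hK : #K = r) (hne : ∀ k ∈ K, ∃ z ∈ V, g z = k) : Block V r where
  parts i := {z ∈ V | g z = (K.equivFinOfCardEq hK).symm i}
  nonempty i := by
    obtain ⟨z, hz, hgz⟩ := hne _ ((K.equivFinOfCardEq hK).symm i).2
    exact ⟨z, mem_filter.2 ⟨hz, hgz⟩⟩
  subset _ := filter_subset _ _
  disj _ _ hij := disjoint_filter.2 fun _ _ h1 h2 =>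
    hij ((K.equivFinOfCardEq hK).symm.injective (Subtype.ext (h1.symm.trans h2)))

lemma Block.mem_edges_ofFibers {κ : Type*} [DecidableEq κ] {g : ℕ → κ} {K : Finset κ}
    {hK : #K = r} {hne : ∀ k ∈ K, ∃ z ∈ V, g z = k} (hg : ∀ z ∈ V, g z ∈ K) {X : Finset ℕ} :
    X ∈ (Block.ofFibers g K hK hne).edges ↔ X ⊆ V ∧ ∀ k ∈ K, #{x ∈ X | g x = k} = 1 := by
  set e := K.equivFinOfCardEq hK
  simp only [Block.edges, Block.ofFibers, Set.mem_ofPred_eq, mem_filter]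
  have hinter : ∀ k, X ⊆ V → X ∩ {z ∈ V | g z = k} = {x ∈ X | g x = k} := fun k hXV => by
    rw [inter_filter, inter_eq_left.2 hXV]
  constructor
  · rintro ⟨hcard, hcov⟩
    have hXV : X ⊆ V := fun x hx => (hcov x hx).elim fun _ h => h.1
    refine ⟨hXV, fun k hk => ?_⟩
    simpa [hinter _ hXV, e] using hcard (e ⟨k, hk⟩)
  · rintro ⟨hXV, hcard⟩
    refine ⟨fun i => by rw [hinter _ hXV]; exact hcard _ (e.symm i).2, fun x hx => ?_⟩
    exact ⟨e ⟨g x, hg x (hXV hx)⟩, hXV hx, by simp [e]⟩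

lemma exactCover_of_pairwise_disjoint {ι : Type*} [Fintype ι] {F : Set (Finset ℕ)}
    (B : ι → Block V r) (hdisj : Pairwise fun i j => Disjoint (B i).edges (B j).edges)
    (hcover : ⋃ i, (B i).edges = F) : ExactCover V r (Fintype.card ι) F := by
  let e := Fintype.equivFin ι
  refine ⟨B ∘ e.symm, fun i j hij => hdisj (e.symm.injective.ne hij), ?_⟩
  rw [← hcover]
  exact e.symm.surjective.iUnion_comp fun i => (B i).edges

end Blocks

namespace MixedFamily

def nextIn (P : Finset ℕ) (z : ℕ) : WithTop ℕ := {p ∈ P | z ≤ p}.min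

section nextIn

variable {P : Finset ℕ} {z p a : ℕ}

lemma nextIn_eq_top : nextIn P z = ⊤ ↔ ∀ p ∈ P, p < z := by
  simp [nextIn, Finset.min_eq_top, filter_eq_empty_iff]

lemma le_nextIn : (z : WithTop ℕ) ≤ nextIn P z :=
  Finset.le_min fun _ hp => WithTop.coe_le_coe.2 (mem_filter.1 hp).2

lemma nextIn_le (hp : p ∈ P) (hz : z ≤ p) : nextIn P z ≤ p :=
  Finset.min_le (mem_filter.2 ⟨hp, hz⟩)

lemma mem_of_nextIn_eq (h : nextIn P z = p) : p ∈ P :=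
  (mem_filter.1 (Finset.mem_of_min h)).1

lemma nextIn_self (hp : p ∈ P) : nextIn P p = p :=
  le_antisymm (nextIn_le hp le_rfl) le_nextIn

lemma nextIn_ne_top_iff : nextIn P z ≠ ⊤ ↔ nextIn P z ∈ P.image (↑) := by
  induction h : nextIn P z using WithTop.recTopCoe with
  | top => simp
  | coe q => simpa using mem_of_nextIn_eq h

lemma nextIn_insert_of_le (hz : z ≤ a) :
    nextIn (insert a P) z = min (a : WithTop ℕ) (nextIn P z) := by
  rw [nextIn, filter_insert, if_pos hz, Finset.min_insert]
  rfl

lemma nextIn_insert_eq_coe_iff (hP : ∀ q ∈ P, q < a) (hz : z ≤ a) (hpa : p ≠ a) :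
    nextIn (insert a P) z = p ↔ nextIn P z = p := by
  rw [nextIn_insert_of_le hz]
  induction h : nextIn P z using WithTop.recTopCoe with
  | top => simpa using Ne.symm hpa
  | coe q => simp [(hP q (mem_of_nextIn_eq h)).le]

lemma nextIn_insert_eq_self_iff (hP : ∀ q ∈ P, q < a) (hz : z ≤ a) :
    nextIn (insert a P) z = a ↔ nextIn P z = ⊤ := by
  rw [nextIn_insert_of_le hz]
  induction h : nextIn P z using WithTop.recTopCoe with
  | top => simp
  | coe q =>
    have hqa := hP q (mem_of_nextIn_eq h)
    simp [hqa.le, hqa.ne]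

end nextIn

/-- `A` meets, for every `p ∈ P`, both `{p}` and the gap `{x ∉ P | nextIn P x = p}` exactly once. -/
def Fits (P A : Finset ℕ) : Prop := ∀ p ∈ P, p ∈ A ∧ #{x ∈ A | nextIn P x = p} = 2

def rank (A : Finset ℕ) (x : ℕ) : ℕ := #{y ∈ A | y ≤ x}

section Fits

variable {P A : Finset ℕ} {p a : ℕ}

lemma Fits.subset (h : Fits P A) : P ⊆ A := fun p hp => (h p hp).1

lemma Fits.card_filter_nextIn_mem_image {U : Finset ℕ} (h : Fits P A) (hU : U ⊆ P) :
    #{x ∈ A | nextIn P x ∈ U.image (↑)} = 2 * #U := by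
  rw [card_eq_sum_card_fiberwise (f := nextIn P) (s := {x ∈ A | nextIn P x ∈ U.image (↑)})
      (t := U.image (↑)) fun x hx => (mem_filter.1 hx).2,
    sum_image fun _ _ _ _ h => Nat.cast_injective h]
  calc ∑ u ∈ U, #{x ∈ {x ∈ A | nextIn P x ∈ U.image (↑)} | nextIn P x = u}
      = ∑ u ∈ U, 2 := sum_congr rfl fun u hu => by
        rw [filter_filter, ← (h u (hU hu)).2]
        congr 1
        exact filter_congr fun x _ => ⟨And.right, fun hx => ⟨hx ▸ mem_image_of_mem _ hu, hx⟩⟩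
    _ = 2 * #U := by rw [sum_const, smul_eq_mul, mul_comm]

lemma Fits.card_eq (h : Fits P A) : #A = 2 * #P + #{x ∈ A | nextIn P x = ⊤} := by
  rw [← card_filter_add_card_filter_not (s := A) (fun x => nextIn P x ∈ P.image (↑)),
    h.card_filter_nextIn_mem_image subset_rfl]
  simp only [← nextIn_ne_top_iff, not_not]

lemma strictMonoOn_rank : StrictMonoOn (rank A) A := fun _ _ y hy hxy =>
  card_lt_card <| (ssubset_iff_of_subset fun _ hz =>
      mem_filter.2 ⟨(mem_filter.1 hz).1, (mem_filter.1 hz).2.trans hxy.le⟩).2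
    ⟨y, mem_filter.2 ⟨hy, le_rfl⟩, fun h => (mem_filter.1 h).2.not_gt hxy⟩

lemma Fits.rank_eq (h : Fits P A) (hp : p ∈ P) : rank A p = 2 * rank P p := by
  rw [rank, rank, ← h.card_filter_nextIn_mem_image (filter_subset _ P)]
  congr 1
  refine filter_congr fun x _ => ⟨fun hxp => ?_, fun hx => ?_⟩
  · have hle := nextIn_le hp hxp
    induction hq : nextIn P x using WithTop.recTopCoe with
    | top => simp_all
    | coe q =>
      rw [hq] at hle
      exact mem_image_of_mem _ (mem_filter.2 ⟨mem_of_nextIn_eq hq, WithTop.coe_le_coe.1 hle⟩)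
  · obtain ⟨q, hq, hxq⟩ := mem_image.1 hx
    exact WithTop.coe_le_coe.1 ((le_nextIn.trans_eq hxq.symm).trans
      (WithTop.coe_le_coe.2 (mem_filter.1 hq).2))

lemma card_filter_even_rank_le (A : Finset ℕ) : #{x ∈ A | Even (rank A x)} ≤ #A / 2 := by
  have hrank : ∀ x ∈ A, 1 ≤ rank A x ∧ rank A x ≤ #A := fun x hx =>
    ⟨card_pos.2 ⟨x, mem_filter.2 ⟨hx, le_rfl⟩⟩, card_filter_le _ _⟩
  calc #{x ∈ A | Even (rank A x)} ≤ #(Icc 1 (#A / 2)) := by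
        refine card_le_card_of_injOn (fun x => rank A x / 2) (fun x hx => ?_)
          fun x hx y hy hxy => ?_
        · obtain ⟨hxA, k, hk⟩ := mem_filter.1 hx
          have := hrank x hxA
          simp only [coe_Icc, Set.mem_Icc]
          omega
        · obtain ⟨hxA, k, hk⟩ := mem_filter.1 hx
          obtain ⟨hyA, l, hl⟩ := mem_filter.1 hy
          exact strictMonoOn_rank.injOn hxA hyA (by simp only at hxy; omega)
    _ = #A / 2 := by simp

lemma Fits.eq_filter_even_rank (h : Fits P A) (htop : #{x ∈ A | nextIn P x = ⊤} ≤ 1) :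
    P = {x ∈ A | Even (rank A x)} := by
  refine eq_of_subset_of_card_le (fun p hp => mem_filter.2 ⟨h.subset hp, ?_⟩) ?_
  · exact ⟨rank P p, (h.rank_eq hp).trans (two_mul _)⟩
  · have := h.card_eq
    have := card_filter_even_rank_le A
    omega

lemma Fits.insert_of_lt (h : Fits P A) (ha : ∀ x ∈ A, x < a) : Fits P (insert a A) := by
  have hPa : nextIn P a = ⊤ := nextIn_eq_top.2 fun q hq => ha q (h.subset hq)
  intro p hp
  rw [filter_insert, if_neg (by simp [hPa])]
  exact ⟨mem_insert_of_mem (h p hp).1, (h p hp).2⟩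

lemma Fits.insert_insert_of_lt (h : Fits P A) (ha : ∀ x ∈ A, x < a)
    (htop : #{x ∈ A | nextIn P x = ⊤} = 1) : Fits (insert a P) (insert a A) := by
  have hP : ∀ q ∈ P, q < a := fun q hq => ha q (h.subset hq)
  have hle : ∀ x ∈ insert a A, x ≤ a := fun x hx =>
    (mem_insert.1 hx).elim le_of_eq fun hx => (ha x hx).le
  have hPa : nextIn P a = ⊤ := nextIn_eq_top.2 hP
  intro p hp
  refine ⟨mem_insert.2 ((mem_insert.1 hp).imp id fun hp => (h p hp).1), ?_⟩
  rcases eq_or_ne p a with rfl | hpa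
  · rw [filter_congr fun x hx => nextIn_insert_eq_self_iff hP (hle x hx), filter_insert,
      if_pos hPa, card_insert_of_notMem fun hp => (ha p (mem_filter.1 hp).1).false, htop]
  · rw [filter_congr fun x hx => nextIn_insert_eq_coe_iff hP (hle x hx) hpa, filter_insert,
      if_neg (by simp [hPa])]
    exact (h p ((mem_insert.1 hp).resolve_left hpa)).2

/-- A new maximum becomes the element above `P`, or joins `P` if there already is one. -/
lemma exists_fits (A : Finset ℕ) : ∃ P, Fits P A ∧ #{x ∈ A | nextIn P x = ⊤} ≤ 1 := by
  induction A using Finset.induction_on_max with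
  | empty => exact ⟨∅, by simp [Fits]⟩
  | insert a A ha ih =>
    obtain ⟨P, hfit, htop⟩ := ih
    have hPa : nextIn P a = ⊤ := nextIn_eq_top.2 fun q hq => ha q (hfit.subset hq)
    rcases Nat.le_one_iff_eq_zero_or_eq_one.1 htop with htop | htop
    · refine ⟨P, hfit.insert_of_lt ha, ?_⟩
      rw [filter_insert, if_pos hPa]
      exact (card_insert_le _ _).trans (by omega)
    · refine ⟨insert a P, hfit.insert_insert_of_lt ha htop, ?_⟩
      rw [filter_false_of_mem fun x hx hxtop => ?_, card_empty]
      · exact zero_le_one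
      have hxa : x ≤ a := (mem_insert.1 hx).elim le_of_eq fun hx => (ha x hx).le
      simpa [hxtop] using nextIn_le (mem_insert_self a P) hxa

end Fits

/-- The parts of the block of `(P, Q)` are the fibres of `key` (so they are disjoint for free):
`z` is labelled by the least element of `P` (or of `Q`, on the `T` side) that is `≥ z`, or `⊤`,
and by whether it lies in `P`. -/
def sideKey (P : Finset ℕ) (z : ℕ) : WithTop ℕ × Bool := (nextIn P z, decide (z ∈ P))

section sideKey

variable {P A : Finset ℕ} {x p : ℕ}

lemma sideKey_eq_coe_true_iff (hp : p ∈ P) :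
    sideKey P x = ((p : WithTop ℕ), true) ↔ x = p := by
  simp only [sideKey, Prod.mk.injEq, decide_eq_true_eq]
  constructor
  · rintro ⟨h, hx⟩
    exact Nat.cast_injective ((nextIn_self hx).symm.trans h)
  · rintro rfl
    exact ⟨nextIn_self hp, hp⟩

lemma sideKey_eq_top_iff : sideKey P x = (⊤, false) ↔ nextIn P x = ⊤ := by
  simp only [sideKey, Prod.mk.injEq, decide_eq_false_iff_not, and_iff_left_iff_imp]
  intro h hx
  simp [nextIn_self hx] at h

lemma sideKey_mem : sideKey P x ∈ insert (⊤, false) (P.image (↑) ×ˢ univ) := by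
  induction h : nextIn P x using WithTop.recTopCoe with
  | top => exact mem_insert.2 (Or.inl (sideKey_eq_top_iff.2 h))
  | coe q => exact mem_insert_of_mem (by simp [sideKey, h, mem_of_nextIn_eq h, em])

lemma card_filter_sideKey_eq_zero (hp : p ∉ P) (b : Bool) :
    #{x ∈ A | sideKey P x = ((p : WithTop ℕ), b)} = 0 :=
  card_eq_zero.2 <| filter_false_of_mem fun _ _ h =>
    hp (mem_of_nextIn_eq (congrArg Prod.fst h))

lemma card_filter_nextIn_eq (p : ℕ) : #{x ∈ A | nextIn P x = p} =
    #{x ∈ A | sideKey P x = ((p : WithTop ℕ), true)} +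
      #{x ∈ A | sideKey P x = ((p : WithTop ℕ), false)} := by
  rw [← card_filter_add_card_filter_not (s := {x ∈ A | nextIn P x = p}) (· ∈ P),
    filter_filter, filter_filter]
  simp [sideKey, and_comm]

lemma fits_iff_card_filter_sideKey :
    Fits P A ↔ ∀ p ∈ P, ∀ b, #{x ∈ A | sideKey P x = ((p : WithTop ℕ), b)} = 1 := by
  refine forall₂_congr fun p hp => ?_
  rw [Bool.forall_bool, card_filter_nextIn_eq,
    filter_congr fun x _ => sideKey_eq_coe_true_iff hp, filter_eq']
  split_ifs <;> simp [*]
  omega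

end sideKey

def key (S P Q : Finset ℕ) (z : ℕ) : WithTop ℕ × Bool :=
  if z ∈ S then sideKey P z else sideKey Q z

def keys (P Q : Finset ℕ) : Finset (WithTop ℕ × Bool) :=
  insert (⊤, false) ((P ∪ Q).image (↑) ×ˢ univ)

/-- `X` is an edge of the block of `(P, Q)`, see `mem_edges_splitBlock`. -/
def Splits (S T P Q X : Finset ℕ) : Prop :=
  X ⊆ S ∪ T ∧ Fits P (X ∩ S) ∧ Fits Q (X ∩ T) ∧
    #{x ∈ X ∩ S | nextIn P x = ⊤} + #{x ∈ X ∩ T | nextIn Q x = ⊤} = 1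

section Splits

variable {S T P Q X : Finset ℕ}

lemma key_mem_keys (z : ℕ) : key S P Q z ∈ keys P Q := by
  have hmono {R : Finset ℕ} (hR : R ⊆ P ∪ Q) :
      insert (⊤, false) (R.image (↑) ×ˢ univ) ⊆ keys P Q :=
    insert_subset_insert _ (product_subset_product_left (image_subset_image hR))
  unfold key
  split_ifs
  · exact hmono subset_union_left sideKey_mem
  · exact hmono subset_union_right sideKey_mem

lemma card_keys (hPQ : Disjoint P Q) : #(keys P Q) = 2 * #P + 2 * #Q + 1 := by
  rw [keys, card_insert_of_notMem (by simp), card_product,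
    card_image_of_injective _ Nat.cast_injective, card_union_of_disjoint hPQ, card_univ,
    Fintype.card_bool]
  ring

lemma card_filter_key (hST : Disjoint S T) (hX : X ⊆ S ∪ T) (k : WithTop ℕ × Bool) :
    #{x ∈ X | key S P Q x = k} =
      #{x ∈ X ∩ S | sideKey P x = k} + #{x ∈ X ∩ T | sideKey Q x = k} := by
  rw [← card_union_of_disjoint (disjoint_filter_filter
    ((hST.mono_left inter_subset_right).mono_right inter_subset_right))]
  refine congrArg card (Finset.ext fun x => ?_)
  simp only [mem_filter, mem_union, mem_inter]
  constructor
  · rintro ⟨hx, hk⟩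
    by_cases hS : x ∈ S
    · exact Or.inl ⟨⟨hx, hS⟩, by rwa [key, if_pos hS] at hk⟩
    · exact Or.inr ⟨⟨hx, (mem_union.1 (hX hx)).resolve_left hS⟩, by rwa [key, if_neg hS] at hk⟩
  · rintro (⟨⟨hx, hS⟩, hk⟩ | ⟨⟨hx, hT⟩, hk⟩)
    · exact ⟨hx, by rwa [key, if_pos hS]⟩
    · exact ⟨hx, by rwa [key, if_neg (disjoint_right.1 hST hT)]⟩

lemma splits_iff (hST : Disjoint S T) (hPQ : Disjoint P Q) :
    Splits S T P Q X ↔ X ⊆ S ∪ T ∧ ∀ k ∈ keys P Q, #{x ∈ X | key S P Q x = k} = 1 := by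
  refine and_congr_right fun hX => ?_
  simp only [keys, forall_mem_insert, mem_product, mem_univ, and_true, Prod.forall,
    card_filter_key hST hX, sideKey_eq_top_iff, fits_iff_card_filter_sideKey]
  have hPT : ∀ p ∈ P, ∀ b, #{x ∈ X ∩ T | sideKey Q x = ((p : WithTop ℕ), b)} = 0 :=
    fun p hp => card_filter_sideKey_eq_zero (disjoint_left.1 hPQ hp)
  have hQS : ∀ q ∈ Q, ∀ b, #{x ∈ X ∩ S | sideKey P x = ((q : WithTop ℕ), b)} = 0 :=
    fun q hq => card_filter_sideKey_eq_zero (disjoint_right.1 hPQ hq)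
  constructor
  · rintro ⟨hP, hQ, htop⟩
    refine ⟨htop, fun k b hk => ?_⟩
    obtain ⟨p, hp, rfl⟩ := mem_image.1 hk
    rcases mem_union.1 hp with hp | hp
    · rw [hP p hp b, hPT p hp b]
    · rw [hQS p hp b, hQ p hp b]
  · rintro ⟨htop, h⟩
    refine ⟨fun p hp b => ?_, fun q hq b => ?_, htop⟩
    · simpa [hPT p hp b] using h p b (mem_image_of_mem _ (mem_union_left _ hp))
    · simpa [hQS q hq b] using h q b (mem_image_of_mem _ (mem_union_right _ hq))

lemma Splits.subset_left (h : Splits S T P Q X) : P ⊆ S :=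
  h.2.1.subset.trans inter_subset_right

lemma Splits.subset_right (h : Splits S T P Q X) : Q ⊆ T :=
  h.2.2.1.subset.trans inter_subset_right

lemma Splits.disjoint (hST : Disjoint S T) (h : Splits S T P Q X) : Disjoint P Q :=
  hST.mono h.subset_left h.subset_right

lemma Splits.card_inter (h : Splits S T P Q X) :
    #(X ∩ S) = 2 * #P ∧ #(X ∩ T) = 2 * #Q + 1 ∨ #(X ∩ S) = 2 * #P + 1 ∧ #(X ∩ T) = 2 * #Q := by
  have := h.2.1.card_eq
  have := h.2.2.1.card_eq
  have := h.2.2.2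
  omega

lemma Splits.eq {P' Q' : Finset ℕ} (h : Splits S T P Q X) (h' : Splits S T P' Q' X) :
    P = P' ∧ Q = Q' := by
  obtain ⟨-, hP, hQ, htop⟩ := h
  obtain ⟨-, hP', hQ', htop'⟩ := h'
  exact ⟨(hP.eq_filter_even_rank (by omega)).trans (hP'.eq_filter_even_rank (by omega)).symm,
    (hQ.eq_filter_even_rank (by omega)).trans (hQ'.eq_filter_even_rank (by omega)).symm⟩

lemma exists_splits (hX : X ⊆ S ∪ T) (hodd : Odd (#(X ∩ S) + #(X ∩ T))) :
    ∃ P Q, Splits S T P Q X := by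
  obtain ⟨P, hP, htopP⟩ := exists_fits (X ∩ S)
  obtain ⟨Q, hQ, htopQ⟩ := exists_fits (X ∩ T)
  refine ⟨P, Q, hX, hP, hQ, ?_⟩
  have := hP.card_eq
  have := hQ.card_eq
  rw [Nat.odd_iff] at hodd
  omega

lemma Splits.exists_key_eq (hST : Disjoint S T) (h : Splits S T P Q X) {k : WithTop ℕ × Bool}
    (hk : k ∈ keys P Q) : ∃ z ∈ S ∪ T, key S P Q z = k := by
  obtain ⟨hX, hcard⟩ := (splits_iff hST (h.disjoint hST)).1 h
  obtain ⟨z, hz⟩ := card_pos.1 ((hcard k hk).symm ▸ one_pos)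
  exact ⟨z, hX (mem_filter.1 hz).1, (mem_filter.1 hz).2⟩

lemma exists_splits_iff {a b : ℕ} (ha : Even a) (hb : Even b) :
    (∃ P Q, #P = a / 2 ∧ #Q = b / 2 ∧ Splits S T P Q X) ↔
      X ⊆ S ∪ T ∧ (#(X ∩ S) = a ∧ #(X ∩ T) = b + 1 ∨ #(X ∩ S) = a + 1 ∧ #(X ∩ T) = b) := by
  rw [Nat.even_iff] at ha hb
  constructor
  · rintro ⟨P, Q, hP, hQ, h⟩
    exact ⟨h.1, by have := h.card_inter; omega⟩
  · rintro ⟨hX, hcard⟩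
    obtain ⟨P, Q, h⟩ := exists_splits hX (Nat.odd_iff.2 (by omega))
    exact ⟨P, Q, by have := h.card_inter; omega, by have := h.card_inter; omega, h⟩

end Splits

noncomputable def splitBlock {S T P Q : Finset ℕ} {r : ℕ} (hST : Disjoint S T)
    (hr : 2 * #P + 2 * #Q + 1 = r) (hX : ∃ X, Splits S T P Q X) : Block (S ∪ T) r :=
  Block.ofFibers (key S P Q) (keys P Q)
    ((card_keys (hX.elim fun _ h => h.disjoint hST)).trans hr)
    fun _ hk => hX.elim fun _ h => h.exists_key_eq hST hk

lemma mem_edges_splitBlock {S T P Q X : Finset ℕ} {r : ℕ} (hST : Disjoint S T)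
    (hr : 2 * #P + 2 * #Q + 1 = r) (hX : ∃ X, Splits S T P Q X) :
    X ∈ (splitBlock hST hr hX).edges ↔ Splits S T P Q X := by
  rw [splitBlock, Block.mem_edges_ofFibers fun z _ => key_mem_keys z,
    splits_iff hST (hX.elim fun _ h => h.disjoint hST)]

open Classical in
noncomputable def splitPairs (S T : Finset ℕ) (k l : ℕ) : Finset (Finset ℕ × Finset ℕ) :=
  {d ∈ S.powersetCard k ×ˢ T.powersetCard l | ∃ X, Splits S T d.1 d.2 X}

lemma mem_splitPairs {S T : Finset ℕ} {k l : ℕ} {d : Finset ℕ × Finset ℕ} :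
    d ∈ splitPairs S T k l ↔ #d.1 = k ∧ #d.2 = l ∧ ∃ X, Splits S T d.1 d.2 X := by
  simp only [splitPairs, mem_filter, mem_product, mem_powersetCard]
  constructor
  · rintro ⟨⟨⟨-, hk⟩, -, hl⟩, hX⟩
    exact ⟨hk, hl, hX⟩
  · rintro ⟨hk, hl, X, hX⟩
    exact ⟨⟨⟨hX.subset_left, hk⟩, hX.subset_right, hl⟩, X, hX⟩

lemma card_splitPairs_le (S T : Finset ℕ) (k l : ℕ) :
    #(splitPairs S T k l) ≤ (#S).choose k * (#T).choose l := by
  classical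
  exact (card_filter_le _ _).trans_eq (by rw [card_product, card_powersetCard, card_powersetCard])

end MixedFamily

open MixedFamily

theorem cover_mixed_family_general (S T : Finset ℕ) (hST : Disjoint S T) (a b : ℕ)
    (hae : Even a) (hbe : Even b) :
    ∃ k ≤ S.card.choose (a / 2) * T.card.choose (b / 2),
      ExactCover (S ∪ T) (a + b + 1) k
        {X | X ⊆ S ∪ T ∧
          (((X ∩ S).card = a ∧ (X ∩ T).card = b + 1) ∨
           ((X ∩ S).card = a + 1 ∧ (X ∩ T).card = b))} := by
  set D := splitPairs S T (a / 2) (b / 2)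
  have hr : ∀ d ∈ D, 2 * #d.1 + 2 * #d.2 + 1 = a + b + 1 := fun d hd => by
    obtain ⟨hk, hl, -⟩ := mem_splitPairs.1 hd
    rw [Nat.even_iff] at hae hbe
    omega
  refine ⟨#D, card_splitPairs_le S T _ _, ?_⟩
  rw [← Fintype.card_coe D]
  refine exactCover_of_pairwise_disjoint
    (fun d => splitBlock hST (hr d d.2) (mem_splitPairs.1 d.2).2.2) (fun d d' hne => ?_) ?_
  · refine Set.disjoint_left.2 fun X h h' => hne ?_
    rw [mem_edges_splitBlock] at h h'
    exact Subtype.ext (Prod.ext (h.eq h').1 (h.eq h').2)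
  · ext X
    simp only [Set.mem_iUnion, mem_edges_splitBlock, Set.mem_ofPred_eq,
      ← exists_splits_iff hae hbe]
    constructor
    · rintro ⟨d, h⟩
      obtain ⟨hk, hl, -⟩ := mem_splitPairs.1 d.2
      exact ⟨_, _, hk, hl, h⟩
    · rintro ⟨P, Q, hP, hQ, h⟩
      exact ⟨⟨(P, Q), mem_splitPairs.2 ⟨hP, hQ, X, h⟩⟩, h⟩

theorem cover_mixed_family (S T : Finset ℕ) (hST : Disjoint S T) (a b : ℕ)
    (hae : Even a) (hbe : Even b) (haS : a + 1 ≤ S.card) (hbT : b + 1 ≤ T.card) :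
    ∃ k ≤ S.card.choose (a / 2) * T.card.choose (b / 2),
      ExactCover (S ∪ T) (a + b + 1) k
        {X | X ⊆ S ∪ T ∧
          (((X ∩ S).card = a ∧ (X ∩ T).card = b + 1) ∨
           ((X ∩ S).card = a + 1 ∧ (X ∩ T).card = b))} :=
  cover_mixed_family_general S T hST a b hae hbe
end
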